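/- Let Λ = ℤ + τℤ be a lattice in ℂ with τ ∈ ℍ, let α ∈ ℂ* satisfy αΛ ⊆ Λ with αᾱ = p (p prime), and write α = cτ + d with c,d ∈ ℤ. Choose a,b ∈ ℤ with ad − bc = 1 and set τ̂ = (aτ+b)/(cτ+d). Then the map z + Λ ↦ z/α + Λ̂, where Λ̂ = ℤ + τ̂ℤ, is a well-defined isomorphism of complex tori ℂ/Λ → ℂ/Λ̂ under which the subgroup (1/ᾱ)ℤ + Λ of ℂ/Λ maps onto the subgroup (1/p)ℤ + Λ̂ of ℂ/Λ̂. -/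

import Mathlib

/-!
Division by `α = cτ + d` maps `Λ` onto the lattice spanned by `τ/α` and `1/α`, of which
`τ̂ = a(τ/α) + b(1/α)` and `1 = c(τ/α) + d(1/α)` form another basis since
`ad − bc = 1`. So `z ↦ z/α` descends to an isomorphism `ℂ/Λ ≃ ℂ/Λ̂`, and it sends `1/ᾱ`
to `1/(αᾱ) = 1/p`.
-/

@[simp]
theorem DistribMulAction.toAddEquiv₀_apply {α β : Type*} [GroupWithZero α] [AddMonoid β]
    [DistribMulAction α β] (x : α) (hx : x ≠ 0) (b : β) :
    DistribMulAction.toAddEquiv₀ β x hx b = x • b :=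
  rfl

theorem AddSubgroup.closure_pair_eq_of_det_eq_one {M : Type*} [AddCommGroup M] (x y : M)
    {a b c d : ℤ} (hdet : a * d - b * c = 1) :
    AddSubgroup.closure ({a • x + b • y, c • x + d • y} : Set M) =
      AddSubgroup.closure {x, y} := by
  set L := AddSubgroup.closure ({a • x + b • y, c • x + d • y} : Set M)
  have hu : a • x + b • y ∈ L := AddSubgroup.subset_closure (by simp)
  have hv : c • x + d • y ∈ L := AddSubgroup.subset_closure (by simp)
  have hx : x = d • (a • x + b • y) - b • (c • x + d • y) := by
    linear_combination (norm := module) -hdet • x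
  have hy : y = a • (c • x + d • y) - c • (a • x + b • y) := by
    linear_combination (norm := module) -hdet • y
  refine le_antisymm ((AddSubgroup.closure_le _).mpr ?_) ((AddSubgroup.closure_le _).mpr ?_)
  · rintro _ (rfl | rfl) <;>
      exact add_mem (zsmul_mem (AddSubgroup.subset_closure (by simp)) _)
        (zsmul_mem (AddSubgroup.subset_closure (by simp)) _)
  · rintro _ (rfl | rfl)
    · rw [SetLike.mem_coe, hx]
      exact sub_mem (zsmul_mem hu _) (zsmul_mem hv _)
    · rw [SetLike.mem_coe, hy]
      exact sub_mem (zsmul_mem hv _) (zsmul_mem hu _)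

theorem AddSubgroup.map_closure_one_div_eq_closure_one_moebius {K : Type*} [Field K] (τ : K)
    {a b c d : ℤ} (hdet : a * d - b * c = 1) (hcd : c * τ + d ≠ 0) :
    (AddSubgroup.closure ({1, τ} : Set K)).map
        (DistribMulAction.toAddEquiv₀ K (c * τ + d)⁻¹ (inv_ne_zero hcd) : K →+ K) =
      AddSubgroup.closure {1, (a * τ + b) / (c * τ + d)} := by
  rw [AddMonoidHom.map_closure, Set.image_pair, Set.pair_comm,
    ← AddSubgroup.closure_pair_eq_of_det_eq_one _ _ hdet, Set.pair_comm]
  congr 3 <;>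
    simp only [AddMonoidHom.coe_coe, DistribMulAction.toAddEquiv₀_apply, smul_eq_mul,
      zsmul_eq_mul] <;>
    field_simp

theorem complex_torus_isogeny_normalization_general (τ : ℂ)
    (α : ℂ) (hα : α ≠ 0) (p : ℕ)
    (a b c d : ℤ)
    (hαcd : α = c * τ + d) (hdet : a * d - b * c = 1)
    (hnorm : α * (starRingEnd ℂ) α = p)
    (Λ Λhat : AddSubgroup ℂ)
    (hΛ : Λ = AddSubgroup.closure ({1, τ} : Set ℂ))
    (hΛhat : Λhat = AddSubgroup.closure ({1, (a * τ + b) / (c * τ + d)} : Set ℂ)) :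
    ∃ e : (ℂ ⧸ Λ) ≃+ (ℂ ⧸ Λhat),
      (∀ z : ℂ, e (QuotientAddGroup.mk z) = QuotientAddGroup.mk (z / α)) ∧
      AddSubgroup.map e.toAddMonoidHom
          (AddSubgroup.zmultiples
            (QuotientAddGroup.mk (1 / (starRingEnd ℂ) α) : ℂ ⧸ Λ)) =
        AddSubgroup.zmultiples (QuotientAddGroup.mk (1 / (p : ℂ)) : ℂ ⧸ Λhat) := by
  let f := DistribMulAction.toAddEquiv₀ ℂ α⁻¹ (inv_ne_zero hα)
  have hmap : Λ.map (f : ℂ →+ ℂ) = Λhat := by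
    subst hαcd hΛ hΛhat
    exact AddSubgroup.map_closure_one_div_eq_closure_one_moebius τ hdet hα
  have he (z : ℂ) : QuotientAddGroup.congr Λ Λhat f hmap z = (z / α : ℂ) :=
    congrArg (QuotientAddGroup.mk (s := Λhat)) (inv_mul_eq_div α z)
  refine ⟨QuotientAddGroup.congr Λ Λhat f hmap, he, ?_⟩
  rw [AddMonoidHom.map_zmultiples, AddEquiv.coe_toAddMonoidHom, he, div_div, mul_comm, hnorm]

/-- let `Λ = ℤ + τℤ` with `τ` in the upper half plane, let `α ∈ ℂ*` satisfy
`αΛ ⊆ Λ` and `αᾱ = p` with `p` prime, write `α = cτ + d` and choose `a, b ∈ ℤ` with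
`ad − bc = 1`; set `τ̂ = (aτ + b)/(cτ + d)` and `Λ̂ = ℤ + τ̂ℤ`. Then `z + Λ ↦ z/α + Λ̂` is a
well-defined isomorphism of complex tori `ℂ/Λ → ℂ/Λ̂` mapping the subgroup `(1/ᾱ)ℤ + Λ`
of `ℂ/Λ` onto the subgroup `(1/p)ℤ + Λ̂` of `ℂ/Λ̂`. -/
theorem complex_torus_isogeny_normalization (τ : ℂ) (hτ : 0 < τ.im)
    (α : ℂ) (hα : α ≠ 0) (p : ℕ) (hp : p.Prime)
    (a b c d : ℤ)
    (hαcd : α = c * τ + d) (hdet : a * d - b * c = 1)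
    (hnorm : α * (starRingEnd ℂ) α = p)
    (Λ Λhat : AddSubgroup ℂ)
    (hΛ : Λ = AddSubgroup.closure ({1, τ} : Set ℂ))
    (hΛhat : Λhat = AddSubgroup.closure ({1, (a * τ + b) / (c * τ + d)} : Set ℂ))
    (hstab : ∀ z ∈ Λ, α * z ∈ Λ) :
    ∃ e : (ℂ ⧸ Λ) ≃+ (ℂ ⧸ Λhat),
      (∀ z : ℂ, e (QuotientAddGroup.mk z) = QuotientAddGroup.mk (z / α)) ∧
      AddSubgroup.map e.toAddMonoidHom
          (AddSubgroup.zmultiples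
            (QuotientAddGroup.mk (1 / (starRingEnd ℂ) α) : ℂ ⧸ Λ)) =
        AddSubgroup.zmultiples (QuotientAddGroup.mk (1 / (p : ℂ)) : ℂ ⧸ Λhat) :=
  complex_torus_isogeny_normalization_general τ α hα p a b c d hαcd hdet hnorm Λ Λhat hΛ hΛhat
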